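/- Let α and β be contact forms on manifolds P^{2p+1} and Q^{2q+1} respectively (so α∧(dα)^p and β∧(dβ)^q are nowhere zero). Let f, g : ℝ → ℝ be smooth functions with f and g nowhere zero and f′g − g′f > 0 everywhere. Then the 1-form f(r)α + g(r)β on ℝ × P × Q (with r the ℝ-coordinate, and the forms pulled back via projections) is a contact form on the (2p+2q+3)-dimensional manifold ℝ × P × Q. -/

import Mathlib

noncomputable section Stmt4

/-- The exterior derivative of a smooth 1-form `α` on a normed space, evaluated at `x` on
the constant tangent vectors `u, w`: `dα_x(u,w) = D_u(α(w)) - D_w(α(u))`. -/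
def dform {P : Type*} [NormedAddCommGroup P] [NormedSpace ℝ P]
    (α : P → P →L[ℝ] ℝ) (x : P) (u w : P) : ℝ :=
  fderiv ℝ (fun y => α y w) x u - fderiv ℝ (fun y => α y u) x w

/-- `α` is a contact form at `x`: `α_x ≠ 0` and `dα_x` is nondegenerate on the hyperplane
`ker α_x`.  (On a `(2m+1)`-dimensional space this is equivalent to `(α ∧ (dα)^m)_x ≠ 0`.) -/
def IsContactAt {P : Type*} [NormedAddCommGroup P] [NormedSpace ℝ P]
    (α : P → P →L[ℝ] ℝ) (x : P) : Prop :=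
  α x ≠ 0 ∧ ∀ u, α x u = 0 → u ≠ 0 → ∃ w, α x w = 0 ∧ dform α x u w ≠ 0

/-- The 1-form `f(r)α + g(r)β` on `ℝ × P × Q`, the forms `α`, `β` pulled back via the
projections, as a continuous linear functional at each point. -/
def mixedForm {P Q : Type*} [NormedAddCommGroup P] [NormedSpace ℝ P]
    [NormedAddCommGroup Q] [NormedSpace ℝ Q]
    (f g : ℝ → ℝ) (α : P → P →L[ℝ] ℝ) (β : Q → Q →L[ℝ] ℝ) (z : ℝ × P × Q) :
    (ℝ × P × Q) →L[ℝ] ℝ :=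
  f z.1 • ((α z.2.1).comp ((ContinuousLinearMap.fst ℝ P Q).comp
      (ContinuousLinearMap.snd ℝ ℝ (P × Q)))) +
  g z.1 • ((β z.2.2).comp ((ContinuousLinearMap.snd ℝ P Q).comp
      (ContinuousLinearMap.snd ℝ ℝ (P × Q))))

lemma dform_zero_left {P : Type*} [NormedAddCommGroup P] [NormedSpace ℝ P]
    (α : P → P →L[ℝ] ℝ) (x w : P) : dform α x 0 w = 0 := by
  have h : (fun y => α y (0:P)) = fun _ => (0:ℝ) := by funext y; simp
  simp [dform, h]

lemma dform_zero_right {P : Type*} [NormedAddCommGroup P] [NormedSpace ℝ P]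
    (α : P → P →L[ℝ] ℝ) (x u : P) : dform α x u 0 = 0 := by
  have h : (fun y => α y (0:P)) = fun _ => (0:ℝ) := by funext y; simp
  simp [dform, h]

lemma fderiv_mixed_apply {P Q : Type*} [NormedAddCommGroup P] [NormedSpace ℝ P]
    [NormedAddCommGroup Q] [NormedSpace ℝ Q]
    (f g : ℝ → ℝ) (hf : ContDiff ℝ (⊤ : ℕ∞) f) (hg : ContDiff ℝ (⊤ : ℕ∞) g)
    (α : P → P →L[ℝ] ℝ) (β : Q → Q →L[ℝ] ℝ)
    (hαsm : ContDiff ℝ (⊤ : ℕ∞) α) (hβsm : ContDiff ℝ (⊤ : ℕ∞) β)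
    (a : P) (b : Q) (z v : ℝ × P × Q) :
    fderiv ℝ (fun y : ℝ × P × Q => f y.1 * α y.2.1 a + g y.1 * β y.2.2 b) z v
    = deriv f z.1 * v.1 * α z.2.1 a
      + f z.1 * fderiv ℝ (fun x => α x a) z.2.1 v.2.1
      + deriv g z.1 * v.1 * β z.2.2 b
      + g z.1 * fderiv ℝ (fun x => β x b) z.2.2 v.2.2 := by
  have hA : Differentiable ℝ (fun x => α x a) :=
    (hαsm.clm_apply contDiff_const).differentiable (by simp)
  have hB : Differentiable ℝ (fun x => β x b) :=
    (hβsm.clm_apply contDiff_const).differentiable (by simp)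
  set p1 := ContinuousLinearMap.fst ℝ ℝ (P × Q)
  set pP := (ContinuousLinearMap.fst ℝ P Q).comp (ContinuousLinearMap.snd ℝ ℝ (P × Q))
  set pQ := (ContinuousLinearMap.snd ℝ P Q).comp (ContinuousLinearMap.snd ℝ ℝ (P × Q))
  have hp : HasFDerivAt (fun y : ℝ × P × Q => y.2.1) pP z :=
    hasFDerivAt_fst.comp z hasFDerivAt_snd
  have hq : HasFDerivAt (fun y : ℝ × P × Q => y.2.2) pQ z :=
    hasFDerivAt_snd.comp z hasFDerivAt_snd
  have h1 : HasFDerivAt (fun y : ℝ × P × Q => f y.1) ((fderiv ℝ f z.1).comp p1) z :=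
    ((hf.differentiable (by simp) z.1).hasFDerivAt).comp z hasFDerivAt_fst
  have h2 : HasFDerivAt (fun y : ℝ × P × Q => α y.2.1 a)
      ((fderiv ℝ (fun x => α x a) z.2.1).comp pP) z :=
    by have h := ((hA z.2.1).hasFDerivAt).comp z hp; exact h
  have h3 : HasFDerivAt (fun y : ℝ × P × Q => g y.1) ((fderiv ℝ g z.1).comp p1) z :=
    ((hg.differentiable (by simp) z.1).hasFDerivAt).comp z hasFDerivAt_fst
  have h4 : HasFDerivAt (fun y : ℝ × P × Q => β y.2.2 b)
      ((fderiv ℝ (fun x => β x b) z.2.2).comp pQ) z :=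
    by have h := ((hB z.2.2).hasFDerivAt).comp z hq; exact h
  have hsum : HasFDerivAt (fun y : ℝ × P × Q => f y.1 * α y.2.1 a + g y.1 * β y.2.2 b)
      ((f z.1 • (fderiv ℝ (fun x => α x a) z.2.1).comp pP
        + α z.2.1 a • (fderiv ℝ f z.1).comp p1)
       + (g z.1 • (fderiv ℝ (fun x => β x b) z.2.2).comp pQ
        + β z.2.2 b • (fderiv ℝ g z.1).comp p1)) z := (h1.mul h2).add (h3.mul h4)
  rw [hsum.fderiv]
  simp only [ContinuousLinearMap.add_apply, ContinuousLinearMap.smul_apply,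
    ContinuousLinearMap.coe_comp', Function.comp_apply, ContinuousLinearMap.coe_fst',
    ContinuousLinearMap.coe_snd', smul_eq_mul, p1, pP, pQ, fderiv_eq_smul_deriv]
  ring

lemma mixedForm_apply {P Q : Type*} [NormedAddCommGroup P] [NormedSpace ℝ P]
    [NormedAddCommGroup Q] [NormedSpace ℝ Q]
    (f g : ℝ → ℝ) (α : P → P →L[ℝ] ℝ) (β : Q → Q →L[ℝ] ℝ) (z w : ℝ × P × Q) :
    mixedForm f g α β z w = f z.1 * α z.2.1 w.2.1 + g z.1 * β z.2.2 w.2.2 := by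
  simp [mixedForm]

lemma dform_mixed {P Q : Type*} [NormedAddCommGroup P] [NormedSpace ℝ P]
    [NormedAddCommGroup Q] [NormedSpace ℝ Q]
    (f g : ℝ → ℝ) (hf : ContDiff ℝ (⊤ : ℕ∞) f) (hg : ContDiff ℝ (⊤ : ℕ∞) g)
    (α : P → P →L[ℝ] ℝ) (β : Q → Q →L[ℝ] ℝ)
    (hαsm : ContDiff ℝ (⊤ : ℕ∞) α) (hβsm : ContDiff ℝ (⊤ : ℕ∞) β)
    (z v v' : ℝ × P × Q) :
    dform (mixedForm f g α β) z v v'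
    = deriv f z.1 * (v.1 * α z.2.1 v'.2.1 - v'.1 * α z.2.1 v.2.1)
      + deriv g z.1 * (v.1 * β z.2.2 v'.2.2 - v'.1 * β z.2.2 v.2.2)
      + f z.1 * dform α z.2.1 v.2.1 v'.2.1
      + g z.1 * dform β z.2.2 v.2.2 v'.2.2 := by
  have key : ∀ w : ℝ × P × Q, (fun y => mixedForm f g α β y w)
      = fun y : ℝ × P × Q => f y.1 * α y.2.1 w.2.1 + g y.1 * β y.2.2 w.2.2 := by
    intro w; funext y; exact mixedForm_apply f g α β y w
  rw [dform, key v', key v,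
    fderiv_mixed_apply f g hf hg α β hαsm hβsm v'.2.1 v'.2.2 z v,
    fderiv_mixed_apply f g hf hg α β hαsm hβsm v.2.1 v.2.2 z v']
  simp only [dform]
  ring


/-- If `α` and `β` are contact forms on `P^{2p+1}` and `Q^{2q+1}` and
`f, g : ℝ → ℝ` are smooth, nowhere zero, with `f′g − g′f > 0` everywhere, then
`f(r)α + g(r)β` is a contact form on the `(2p+2q+3)`-dimensional manifold `ℝ × P × Q`. -/
theorem mixed_form_contact (p q : ℕ) (P Q : Type*)
    [NormedAddCommGroup P] [NormedSpace ℝ P] [FiniteDimensional ℝ P]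
    [NormedAddCommGroup Q] [NormedSpace ℝ Q] [FiniteDimensional ℝ Q]
    (hP : Module.finrank ℝ P = 2 * p + 1) (hQ : Module.finrank ℝ Q = 2 * q + 1)
    (α : P → P →L[ℝ] ℝ) (β : Q → Q →L[ℝ] ℝ)
    (hαsm : ContDiff ℝ (⊤ : ℕ∞) α) (hβsm : ContDiff ℝ (⊤ : ℕ∞) β)
    (hα : ∀ x, IsContactAt α x) (hβ : ∀ x, IsContactAt β x)
    (f g : ℝ → ℝ) (hf : ContDiff ℝ (⊤ : ℕ∞) f) (hg : ContDiff ℝ (⊤ : ℕ∞) g)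
    (hf0 : ∀ r, f r ≠ 0) (hg0 : ∀ r, g r ≠ 0)
    (hfg : ∀ r, deriv f r * g r - deriv g r * f r > 0) :
    ∀ z : ℝ × P × Q, IsContactAt (mixedForm f g α β) z := by
  rintro ⟨r, x, y⟩
  obtain ⟨u₀, hu₀⟩ : ∃ u, α x u ≠ 0 := by
    by_contra h; push_neg at h
    exact (hα x).1 (ContinuousLinearMap.ext fun u => by simp [h u])
  obtain ⟨w₀, hw₀⟩ : ∃ w, β y w ≠ 0 := by
    by_contra h; push_neg at h
    exact (hβ y).1 (ContinuousLinearMap.ext fun w => by simp [h w])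
  have hfg' := hfg r
  constructor
  · intro h
    have h' := congrArg (fun L : (ℝ × P × Q) →L[ℝ] ℝ => L ((0 : ℝ), u₀, (0 : Q))) h
    simp only [mixedForm_apply, ContinuousLinearMap.zero_apply, map_zero, mul_zero,
      add_zero] at h'
    exact mul_ne_zero (hf0 r) hu₀ h'
  · rintro ⟨t, u, w⟩ hv0 hvne
    simp only [mixedForm_apply] at hv0
    by_cases hαu : α x u = 0
    · have hβw : β y w = 0 := by
        have hgw : g r * β y w = 0 := by rw [hαu, mul_zero, zero_add] at hv0; exact hv0
        exact (mul_eq_zero.mp hgw).resolve_left (hg0 r)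
      by_cases hu0 : u = 0
      · by_cases hw0 : w = 0
        · subst hu0; subst hw0
          have ht : t ≠ 0 := by
            intro h0; exact hvne (by simp [Prod.ext_iff, h0])
          refine ⟨((0 : ℝ), (g r * β y w₀) • u₀, (-(f r * α x u₀)) • w₀), ?_, ?_⟩
          · simp only [mixedForm_apply, map_smul, smul_eq_mul]; ring
          · have hd : dform (mixedForm f g α β) (r, x, y)
                ((t : ℝ), (0 : P), (0 : Q))
                ((0 : ℝ), (g r * β y w₀) • u₀, (-(f r * α x u₀)) • w₀)
                = α x u₀ * β y w₀ * t * (deriv f r * g r - deriv g r * f r) := by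
              rw [dform_mixed f g hf hg α β hαsm hβsm]
              simp only [dform_zero_left, map_smul, map_zero, smul_eq_mul, mul_zero,
                zero_mul, sub_zero, zero_sub, add_zero, zero_add, neg_zero]
              ring
            rw [hd]
            exact mul_ne_zero (mul_ne_zero (mul_ne_zero hu₀ hw₀) ht) (ne_of_gt hfg')
        · obtain ⟨w'', hw''0, hdβ⟩ := (hβ y).2 w hβw hw0
          subst hu0
          refine ⟨((0 : ℝ), (0 : P), w''), ?_, ?_⟩
          · simp only [mixedForm_apply, map_zero, mul_zero, hw''0, zero_add]
          · have hd : dform (mixedForm f g α β) (r, x, y)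
                ((t : ℝ), (0 : P), w) ((0 : ℝ), (0 : P), w'')
                = g r * dform β y w w'' := by
              rw [dform_mixed f g hf hg α β hαsm hβsm]
              simp only [dform_zero_left, hw''0, hβw, map_zero, mul_zero, zero_mul,
                sub_zero, add_zero, zero_add, sub_self]
            rw [hd]
            exact mul_ne_zero (hg0 r) hdβ
      · obtain ⟨u'', hu''0, hdα⟩ := (hα x).2 u hαu hu0
        refine ⟨((0 : ℝ), u'', (0 : Q)), ?_, ?_⟩
        · simp only [mixedForm_apply, map_zero, mul_zero, hu''0, add_zero]
        · have hd : dform (mixedForm f g α β) (r, x, y)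
              ((t : ℝ), u, w) ((0 : ℝ), u'', (0 : Q))
              = f r * dform α x u u'' := by
            rw [dform_mixed f g hf hg α β hαsm hβsm]
            simp only [dform_zero_right, hu''0, hαu, hβw, map_zero, mul_zero, zero_mul,
              sub_zero, add_zero, zero_add, sub_self]
          rw [hd]
          exact mul_ne_zero (hf0 r) hdα
    · refine ⟨((1 : ℝ), (0 : P), (0 : Q)), ?_, ?_⟩
      · simp only [mixedForm_apply, map_zero, mul_zero, add_zero]
      · have hd : dform (mixedForm f g α β) (r, x, y)
            ((t : ℝ), u, w) ((1 : ℝ), (0 : P), (0 : Q))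
            = -(deriv f r * α x u + deriv g r * β y w) := by
          rw [dform_mixed f g hf hg α β hαsm hβsm]
          simp only [dform_zero_right, map_zero, mul_zero, zero_mul, zero_sub,
            add_zero, one_mul]
          ring
        rw [hd]
        intro h0
        have hA : deriv f r * α x u + deriv g r * β y w = 0 := by linarith [neg_eq_zero.mp h0]
        have hgw : g r * β y w = -(f r * α x u) := by linarith
        have hkey : g r * (deriv f r * α x u + deriv g r * β y w)
            = α x u * (deriv f r * g r - deriv g r * f r) := by
          have expand : g r * (deriv f r * α x u + deriv g r * β y w)
              = deriv f r * g r * α x u + deriv g r * (g r * β y w) := by ring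
          rw [expand, hgw]; ring
        rw [hA, mul_zero] at hkey
        exact hαu ((mul_eq_zero.mp hkey.symm).resolve_right (ne_of_gt hfg'))

end Stmt4
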